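/- arXiv:2212.00363 — 2 statements merged into one kernel-verified Lean document; each statement's English description precedes it below -/
import Mathlib

section
/- In a weak Hopf quasigroup H, the antipode is unique: if S and S' both satisfy the antipode axioms, then S = S'. -/
noncomputable section

open TensorProduct

namespace WHQPaper

variable (k : Type*) [Field k]

/-- `(a ⊗ b) ↦ f a * g b` into the scalars. -/
def sc2 {M N : Type*} [AddCommGroup M] [Module k M] [AddCommGroup N] [Module k N]
    (f : M →ₗ[k] k) (g : N →ₗ[k] k) : M ⊗[k] N →ₗ[k] k :=
  (LinearMap.mul' k k).comp (TensorProduct.map f g)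

/-- `(a ⊗ b) ↦ f a • g b`. -/
def sm2 {M N P : Type*} [AddCommGroup M] [Module k M] [AddCommGroup N] [Module k N]
    [AddCommGroup P] [Module k P] (f : M →ₗ[k] k) (g : N →ₗ[k] P) : M ⊗[k] N →ₗ[k] P :=
  TensorProduct.lift ((LinearMap.lsmul k P).compl₁₂ f g)

/-- `(a ⊗ b) ↦ m (f a) (g b)`. -/
def mu2 {M N A B C : Type*} [AddCommGroup M] [Module k M] [AddCommGroup N] [Module k N]
    [AddCommGroup A] [Module k A] [AddCommGroup B] [Module k B] [AddCommGroup C] [Module k C]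
    (m : A →ₗ[k] B →ₗ[k] C) (f : M →ₗ[k] A) (g : N →ₗ[k] B) : M ⊗[k] N →ₗ[k] C :=
  TensorProduct.lift (m.compl₁₂ f g)

/-- the bilinear map `(a ⊗ b) ↦ (c ⊗ d) ↦ (f a c) ⊗ (g b d)`. -/
def pair2 {A B C D E₁ E₂ : Type*} [AddCommGroup A] [Module k A] [AddCommGroup B] [Module k B]
    [AddCommGroup C] [Module k C] [AddCommGroup D] [Module k D]
    [AddCommGroup E₁] [Module k E₁] [AddCommGroup E₂] [Module k E₂]
    (f : A →ₗ[k] C →ₗ[k] E₁) (g : B →ₗ[k] D →ₗ[k] E₂) :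
    (A ⊗[k] B) →ₗ[k] (C ⊗[k] D) →ₗ[k] (E₁ ⊗[k] E₂) :=
  TensorProduct.lift ((TensorProduct.mapBilinear (RingHom.id k) C D E₁ E₂).compl₁₂ f g)

variable {H : Type*} [AddCommGroup H] [Module k H]

/-- A weak Hopf quasigroup without its antipode: a unital (not necessarily associative)
magma and a comonoid subject to the compatibility axioms (1)-(3) of
Alvarez-Fernandez-Gonzalez. -/
structure WHQpre (H : Type*) [AddCommGroup H] [Module k H] where
  mul : H →ₗ[k] H →ₗ[k] H
  one : H
  comul : H →ₗ[k] H ⊗[k] H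
  counit : H →ₗ[k] k
  one_mul' : ∀ h, mul one h = h
  mul_one' : ∀ h, mul h one = h
  coassoc : ∀ h, (TensorProduct.assoc k H H H)
      ((TensorProduct.map comul LinearMap.id) (comul h))
    = (TensorProduct.map LinearMap.id comul) (comul h)
  counit_left : ∀ h, (TensorProduct.lid k H)
      ((TensorProduct.map counit LinearMap.id) (comul h)) = h
  counit_right : ∀ h, (TensorProduct.rid k H)
      ((TensorProduct.map LinearMap.id counit) (comul h)) = h
  /-- (1): `δ(hg) = h₁g₁ ⊗ h₂g₂` -/
  comul_mul : ∀ h g, comul (mul h g) = pair2 k mul mul (comul h) (comul g)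
  /-- (2): `ε((hg)l) = ε(h(gl))` -/
  eps_assoc : ∀ h g l, counit (mul (mul h g) l) = counit (mul h (mul g l))
  /-- (2): `ε((hg)l) = ε(hg₁)ε(g₂l)` -/
  eps_weak₁ : ∀ h g l, counit (mul (mul h g) l)
    = sc2 k (counit ∘ₗ mul h) (counit ∘ₗ mul.flip l) (comul g)
  /-- (2): `ε((hg)l) = ε(hg₂)ε(g₁l)` -/
  eps_weak₂ : ∀ h g l, counit (mul (mul h g) l)
    = sc2 k (counit ∘ₗ mul.flip l) (counit ∘ₗ mul h) (comul g)
  /-- (3): `1₁ ⊗ 1₂ ⊗ 1₃ = 1₁ ⊗ 1₂1'₁ ⊗ 1'₂` -/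
  unit_weak₁ : (TensorProduct.map comul LinearMap.id) (comul one)
    = pair2 k (pair2 k mul mul) mul ((comul one) ⊗ₜ[k] one)
        ((TensorProduct.assoc k H H H).symm (one ⊗ₜ[k] comul one))
  /-- (3): `1₁ ⊗ 1₂ ⊗ 1₃ = 1₁ ⊗ 1'₁1₂ ⊗ 1'₂` -/
  unit_weak₂ : (TensorProduct.map comul LinearMap.id) (comul one)
    = pair2 k (pair2 k mul mul) mul
        ((TensorProduct.assoc k H H H).symm (one ⊗ₜ[k] comul one)) ((comul one) ⊗ₜ[k] one)

variable {k}

/-- convolution product of linear endomorphisms: `(f * g)(h) = f(h₁)g(h₂)`. -/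
def WHQpre.conv (A : WHQpre k H) (f g : H →ₗ[k] H) : H →ₗ[k] H :=
  (mu2 k A.mul f g).comp A.comul

/-- The axioms (4) for an antipode `S` of a weak Hopf quasigroup, with target morphism
`εt = id * S` and source morphism `εs = S * id`. -/
structure WHQpre.IsAntipode (A : WHQpre k H) (S εt εs : H →ₗ[k] H) : Prop where
  /-- `ε_t = id_H * S` -/
  εt_eq : εt = A.conv LinearMap.id S
  /-- `ε_s = S * id_H` -/
  εs_eq : εs = A.conv S LinearMap.id
  /-- (4-1): `ε_t(h) = ε(1₁h)1₂` -/
  εt_def : ∀ h, εt h = sm2 k (A.counit ∘ₗ A.mul.flip h) LinearMap.id (A.comul A.one)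
  /-- (4-2): `ε_s(h) = 1₁ε(h1₂)` -/
  εs_def : ∀ h, εs h = sm2 k (A.counit ∘ₗ A.mul h) LinearMap.id
      ((TensorProduct.comm k H H) (A.comul A.one))
  /-- (4-3): `S = S * ε_t` -/
  S_conv_εt : A.conv S εt = S
  /-- (4-3): `S = ε_s * S` -/
  εs_conv_S : A.conv εs S = S
  /-- (4-4): `S(h₁)(h₂g) = ε_s(h)g` -/
  ax44 : ∀ h g, mu2 k A.mul S (A.mul.flip g) (A.comul h) = A.mul (εs h) g
  /-- (4-5): `h₁(S(h₂)g) = ε_t(h)g` -/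
  ax45 : ∀ h g, mu2 k A.mul LinearMap.id ((A.mul.flip g) ∘ₗ S) (A.comul h) = A.mul (εt h) g
  /-- (4-6): `(hg₁)S(g₂) = hε_t(g)` -/
  ax46 : ∀ h g, mu2 k A.mul (A.mul h) S (A.comul g) = A.mul h (εt g)
  /-- (4-7): `(hS(g₁))g₂ = hε_s(g)` -/
  ax47 : ∀ h g, mu2 k A.mul ((A.mul h) ∘ₗ S) LinearMap.id (A.comul g) = A.mul h (εs g)

variable (k)

/-- A weak Hopf quasigroup. -/
structure WHQ (H : Type*) [AddCommGroup H] [Module k H] extends WHQpre k H where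
  S : H →ₗ[k] H
  εt : H →ₗ[k] H
  εs : H →ₗ[k] H
  antipode : toWHQpre.IsAntipode S εt εs

end WHQPaper

/-!
Since `ε_t` and `ε_s` are given by the formulas (4-1) and (4-2), which do not mention the
antipode, two antipodes `S`, `S'` share them. Then
`S = S * ε_t = S(h₁)(h₂S'(h₃)) = (S(h₁)h₂)S'(h₃) = ε_s * S' = S'`,
where the reassociation is not associativity of the product but axiom (4-6) for `S'`
applied with `h = S(h₁)`, followed by coassociativity.
-/

namespace WHQPaper

variable {k H : Type*} [Field k] [AddCommGroup H] [Module k H]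

lemma mu2_assoc_symm_tmul (m : H →ₗ[k] H →ₗ[k] H) (f g l : H →ₗ[k] H) (a : H)
    (t : H ⊗[k] H) :
    mu2 k m (mu2 k m f g) l ((TensorProduct.assoc k H H H).symm (a ⊗ₜ[k] t))
      = mu2 k m (m (f a) ∘ₗ g) l t := by
  induction t using TensorProduct.induction_on with
  | zero => simp
  | tmul b c => rfl
  | add x y hx hy => simp only [TensorProduct.tmul_add, map_add, hx, hy]

lemma mu2_map_left (m : H →ₗ[k] H →ₗ[k] H) (F : H ⊗[k] H →ₗ[k] H) (g : H →ₗ[k] H)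
    (δ : H →ₗ[k] H ⊗[k] H) (t : H ⊗[k] H) :
    mu2 k m F g (TensorProduct.map δ LinearMap.id t) = mu2 k m (F ∘ₗ δ) g t := by
  induction t using TensorProduct.induction_on with
  | zero => simp
  | tmul b c => rfl
  | add x y hx hy => simp only [map_add, hx, hy]

namespace WHQpre

variable (A : WHQpre k H)

lemma conv_conv_apply (f g l : H →ₗ[k] H) (h : H) :
    A.conv (A.conv f g) l h = mu2 k A.mul (mu2 k A.mul f g) l
      ((TensorProduct.assoc k H H H).symm (TensorProduct.map LinearMap.id A.comul (A.comul h))) := by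
  rw [← A.coassoc h, LinearEquiv.symm_apply_apply, mu2_map_left]
  rfl

namespace IsAntipode

variable {A} {S εt εs S' εt' εs' : H →ₗ[k] H}

lemma εt_unique (hS : A.IsAntipode S εt εs) (hS' : A.IsAntipode S' εt' εs') : εt = εt' := by
  ext h
  rw [hS.εt_def, hS'.εt_def]

lemma εs_unique (hS : A.IsAntipode S εt εs) (hS' : A.IsAntipode S' εt' εs') : εs = εs' := by
  ext h
  rw [hS.εs_def, hS'.εs_def]

lemma conv_εt (hS : A.IsAntipode S εt εs) (f : H →ₗ[k] H) :
    A.conv f εt = A.conv (A.conv f LinearMap.id) S := by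
  have on_tensors : ∀ t : H ⊗[k] H, mu2 k A.mul f εt t = mu2 k A.mul (mu2 k A.mul f LinearMap.id) S
      ((TensorProduct.assoc k H H H).symm (TensorProduct.map LinearMap.id A.comul t)) := by
    intro t
    induction t using TensorProduct.induction_on with
    | zero => simp
    | tmul a b =>
        rw [TensorProduct.map_tmul, LinearMap.id_apply, mu2_assoc_symm_tmul, LinearMap.comp_id,
          hS.ax46]
        rfl
    | add x y hx hy => simp only [map_add, hx, hy]
  ext h
  rw [conv_conv_apply, ← on_tensors]
  rfl

end IsAntipode

end WHQpre

end WHQPaper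

open WHQPaper in
/-- In a weak Hopf quasigroup, the antipode is unique: if `S` and `S'` both satisfy
the antipode axioms, then `S = S'`. -/
theorem antipode_unique {k H : Type*} [Field k] [AddCommGroup H] [Module k H]
    (A : WHQpre k H) (S εt εs S' εt' εs' : H →ₗ[k] H)
    (h1 : A.IsAntipode S εt εs) (h2 : A.IsAntipode S' εt' εs') :
    S = S' :=
  calc S = A.conv S εt := h1.S_conv_εt.symm
    _ = A.conv (A.conv S LinearMap.id) S' := by rw [h1.εt_unique h2, h2.conv_εt]
    _ = A.conv εs' S' := by rw [← h1.εs_eq, h1.εs_unique h2]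
    _ = S' := h2.εs_conv_S
end
end

section
/- In a group-cograded weak Hopf quasigroup H = (H_p)_{p∈G}, for every p ∈ G the maps ε_p^t, ε_p^s, ε̃_p^t, ε̃_p^s : H_e → H_p satisfy the composition identities: ε_p^t ∘ ε̃_p^t = ε_p^t, ε̃_p^t ∘ ε_p^t = ε̃_p^t, ε_p^s ∘ ε̃_p^s = ε_p^s, and ε̃_p^s ∘ ε_p^s = ε̃_p^s (where composition is taken via the case p = e of the inner map). -/
noncomputable section

open TensorProduct

namespace WHQPaper

variable (k : Type*) [Field k]

variable {G : Type*} [Group G]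

/-- transport along an equality of indices. -/
def castH (H : G → Type*) [∀ p, AddCommGroup (H p)] [∀ p, Module k (H p)]
    {p q : G} (e : p = q) : H p →ₗ[k] H q where
  toFun x := e ▸ x
  map_add' := by subst e; intros; rfl
  map_smul' := by subst e; intros; rfl

variable (G)

/-- A group-cograded weak Hopf quasigroup: a family of (not necessarily associative)
unital algebras `(H_p)_{p ∈ G}`, comultiplications `Δ_{p,q} : H_{pq} → H_p ⊗ H_q` which are
coassociative algebra maps, a counit `ε : H_e → k` and an antipode
`S = (S_p : H_p → H_{p⁻¹})`, subject to the axioms of Definition 3.1, together with the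
four (co)unital maps `ε^t_p, ε^s_p, ε̃^t_p, ε̃^s_p : H_e → H_p` given by their defining
formulas. -/
structure GCWHQ (H : G → Type*) [∀ p, AddCommGroup (H p)] [∀ p, Module k (H p)] where
  mul : ∀ p, H p →ₗ[k] H p →ₗ[k] H p
  one : ∀ p, H p
  comul : ∀ p q, H (p * q) →ₗ[k] H p ⊗[k] H q
  counit : H 1 →ₗ[k] k
  antS : ∀ p, H p →ₗ[k] H p⁻¹
  εt : ∀ p, H 1 →ₗ[k] H p
  εs : ∀ p, H 1 →ₗ[k] H p
  εt' : ∀ p, H 1 →ₗ[k] H p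
  εs' : ∀ p, H 1 →ₗ[k] H p
  one_mul' : ∀ p (h : H p), mul p (one p) h = h
  mul_one' : ∀ p (h : H p), mul p h (one p) = h
  /-- each `Δ_{p,q}` is multiplicative -/
  comul_mul : ∀ p q (h g : H (p * q)),
    comul p q (mul (p * q) h g) = pair2 k (mul p) (mul q) (comul p q h) (comul p q g)
  coassoc : ∀ p q r (h : H (p * q * r)),
    (TensorProduct.assoc k (H p) (H q) (H r))
        ((TensorProduct.map (comul p q) LinearMap.id) (comul (p * q) r h))
      = (TensorProduct.map LinearMap.id (comul q r))
          (comul p (q * r) (castH k H (mul_assoc p q r) h))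
  counit_left : ∀ p (h : H p),
    (TensorProduct.lid k (H p)) ((TensorProduct.map counit LinearMap.id)
      (comul 1 p (castH k H (one_mul p).symm h))) = h
  counit_right : ∀ p (h : H p),
    (TensorProduct.rid k (H p)) ((TensorProduct.map LinearMap.id counit)
      (comul p 1 (castH k H (mul_one p).symm h))) = h
  eps_assoc : ∀ g h l : H 1, counit (mul 1 (mul 1 g h) l) = counit (mul 1 g (mul 1 h l))
  /-- `ε(ghl) = ε(gh₁)ε(h₂l)` -/
  eps_weak₁ : ∀ g h l : H 1, counit (mul 1 (mul 1 g h) l)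
    = sc2 k (counit ∘ₗ mul 1 g) (counit ∘ₗ (mul 1).flip l)
        (comul 1 1 (castH k H (one_mul (1 : G)).symm h))
  /-- `ε(ghl) = ε(gh₂)ε(h₁l)` -/
  eps_weak₂ : ∀ g h l : H 1, counit (mul 1 (mul 1 g h) l)
    = sc2 k (counit ∘ₗ (mul 1).flip l) (counit ∘ₗ mul 1 g)
        (comul 1 1 (castH k H (one_mul (1 : G)).symm h))
  /-- (3.1): `(Δ_{p,q} ⊗ id)Δ_{pq,r}(1) = (Δ_{p,q}(1) ⊗ 1_r)(1_p ⊗ Δ_{q,r}(1))` -/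
  unit_weak₁ : ∀ p q r, (TensorProduct.map (comul p q) LinearMap.id)
      (comul (p * q) r (one (p * q * r)))
    = pair2 k (pair2 k (mul p) (mul q)) (mul r)
        ((comul p q (one (p * q))) ⊗ₜ[k] (one r))
        ((TensorProduct.assoc k (H p) (H q) (H r)).symm
          ((one p) ⊗ₜ[k] (comul q r (one (q * r)))))
  /-- (3.2): `(Δ_{p,q} ⊗ id)Δ_{pq,r}(1) = (1_p ⊗ Δ_{q,r}(1))(Δ_{p,q}(1) ⊗ 1_r)` -/
  unit_weak₂ : ∀ p q r, (TensorProduct.map (comul p q) LinearMap.id)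
      (comul (p * q) r (one (p * q * r)))
    = pair2 k (pair2 k (mul p) (mul q)) (mul r)
        ((TensorProduct.assoc k (H p) (H q) (H r)).symm
          ((one p) ⊗ₜ[k] (comul q r (one (q * r)))))
        ((comul p q (one (p * q))) ⊗ₜ[k] (one r))
  /-- (3.4): `ε^t_p(h) = ε(1_{(1,e)}h) 1_{(2,p)}` -/
  εt_def : ∀ p (h : H 1), εt p h
    = sm2 k (counit ∘ₗ (mul 1).flip h) LinearMap.id (comul 1 p (one (1 * p)))
  /-- (3.5): `ε^s_p(h) = 1_{(1,p)} ε(h1_{(2,e)})` -/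
  εs_def : ∀ p (h : H 1), εs p h
    = sm2 k (counit ∘ₗ mul 1 h) LinearMap.id
        ((TensorProduct.comm k (H p) (H 1)) (comul p 1 (one (p * 1))))
  /-- (3.11): `ε̃^t_p(h) = 1_{(1,p)} ε(1_{(2,e)}h)` -/
  εt'_def : ∀ p (h : H 1), εt' p h
    = sm2 k (counit ∘ₗ (mul 1).flip h) LinearMap.id
        ((TensorProduct.comm k (H p) (H 1)) (comul p 1 (one (p * 1))))
  /-- (3.12): `ε̃^s_p(h) = ε(h1_{(1,e)}) 1_{(2,p)}` -/
  εs'_def : ∀ p (h : H 1), εs' p h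
    = sm2 k (counit ∘ₗ mul 1 h) LinearMap.id (comul 1 p (one (1 * p)))
  /-- (3.6): `S = S * ε_t` -/
  S_conv_εt : ∀ p (h : H p),
    mu2 k (mul p⁻¹) (antS p) (εt p⁻¹) (comul p 1 (castH k H (mul_one p).symm h)) = antS p h
  /-- (3.6): `S = ε_s * S` -/
  εs_conv_S : ∀ p (h : H p),
    mu2 k (mul p⁻¹) (εs p⁻¹) (antS p) (comul 1 p (castH k H (one_mul p).symm h)) = antS p h
  /-- (3.7): `S(h_{(1,p⁻¹)})(h_{(2,p)}g) = ε^s_p(h)g` -/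
  antip₁ : ∀ p (h : H 1) (g : H p),
    mu2 k (mul p) ((castH k H (inv_inv p)) ∘ₗ antS p⁻¹) ((mul p).flip g)
        (comul p⁻¹ p (castH k H (inv_mul_cancel p).symm h))
      = mul p (εs p h) g
  /-- (3.8): `h_{(1,p)}(S(h_{(2,p⁻¹)})g) = ε^t_p(h)g` -/
  antip₂ : ∀ p (h : H 1) (g : H p),
    mu2 k (mul p) LinearMap.id (((mul p).flip g) ∘ₗ (castH k H (inv_inv p)) ∘ₗ antS p⁻¹)
        (comul p p⁻¹ (castH k H (mul_inv_cancel p).symm h))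
      = mul p (εt p h) g
  /-- (3.9): `(gh_{(1,p)})S(h_{(2,p⁻¹)}) = gε^t_p(h)` -/
  antip₃ : ∀ p (h : H 1) (g : H p),
    mu2 k (mul p) (mul p g) ((castH k H (inv_inv p)) ∘ₗ antS p⁻¹)
        (comul p p⁻¹ (castH k H (mul_inv_cancel p).symm h))
      = mul p g (εt p h)
  /-- (3.10): `(gS(h_{(1,p⁻¹)}))h_{(2,p)} = gε^s_p(h)` -/
  antip₄ : ∀ p (h : H 1) (g : H p),
    mu2 k (mul p) ((mul p g) ∘ₗ (castH k H (inv_inv p)) ∘ₗ antS p⁻¹) LinearMap.id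
        (comul p⁻¹ p (castH k H (inv_mul_cancel p).symm h))
      = mul p g (εs p h)

end WHQPaper

/-!
Taking `1` as the middle factor in the weak multiplicativity of the counit gives
`ε(ah) = ε(a1₁)ε(1₂h) = ε(a1₂)ε(1₁h)`. Hence the counit does not see the four maps at
`p = e` on the appropriate side: `ε(a ε̃^t_e(h)) = ε(a ε^t_e(h)) = ε(ah)` and
`ε(ε̃^s_e(h) b) = ε(ε^s_e(h) b) = ε(hb)`. Since `ε^t_p, ε̃^t_p` depend on `h` only through
the functional `ε(· h)`, and `ε^s_p, ε̃^s_p` only through `ε(h ·)`, the identities follow.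
-/

namespace WHQPaper

variable {k : Type*} [Field k]

section Contractions

variable {M N P Q : Type*} [AddCommGroup M] [Module k M] [AddCommGroup N] [Module k N]
  [AddCommGroup P] [Module k P] [AddCommGroup Q] [Module k Q]

@[simp]
theorem sm2_tmul (f : M →ₗ[k] k) (g : N →ₗ[k] P) (a : M) (b : N) :
    sm2 k f g (a ⊗ₜ[k] b) = f a • g b := rfl

@[simp]
theorem sc2_tmul (f : M →ₗ[k] k) (g : N →ₗ[k] k) (a : M) (b : N) :
    sc2 k f g (a ⊗ₜ[k] b) = f a * g b := rfl

theorem map_sm2 (φ : P →ₗ[k] Q) (f : M →ₗ[k] k) (g : N →ₗ[k] P) (t : M ⊗[k] N) :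
    φ (sm2 k f g t) = sm2 k f (φ ∘ₗ g) t := by
  induction t using TensorProduct.induction_on with
  | zero => simp
  | tmul a b => simp
  | add x y hx hy => simp only [map_add, hx, hy]

theorem sm2_eq_sc2 (f : M →ₗ[k] k) (g : N →ₗ[k] k) : sm2 k f g = sc2 k f g :=
  TensorProduct.ext' fun _ _ => rfl

theorem sc2_comm (f : M →ₗ[k] k) (g : N →ₗ[k] k) (t : N ⊗[k] M) :
    sc2 k f g (TensorProduct.comm k N M t) = sc2 k g f t := by
  induction t using TensorProduct.induction_on with
  | zero => simp
  | tmul a b => simp [mul_comm]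
  | add x y hx hy => simp only [map_add, hx, hy]

end Contractions

namespace GCWHQ

variable {G : Type*} [Group G] {H : G → Type*} [∀ p, AddCommGroup (H p)]
  [∀ p, Module k (H p)] (A : GCWHQ k G H)

theorem castH_one {p q : G} (e : p = q) : castH k H e (A.one p) = A.one q := by
  subst e; rfl

theorem counit_mul_eq_sc2_comul_one (a h : H 1) :
    A.counit (A.mul 1 a h)
      = sc2 k (A.counit ∘ₗ A.mul 1 a) (A.counit ∘ₗ (A.mul 1).flip h)
          (A.comul 1 1 (A.one (1 * 1))) := by
  simpa only [A.mul_one', A.castH_one] using A.eps_weak₁ a (A.one 1) h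

theorem counit_mul_eq_sc2_comul_one' (a h : H 1) :
    A.counit (A.mul 1 a h)
      = sc2 k (A.counit ∘ₗ (A.mul 1).flip h) (A.counit ∘ₗ A.mul 1 a)
          (A.comul 1 1 (A.one (1 * 1))) := by
  simpa only [A.mul_one', A.castH_one] using A.eps_weak₂ a (A.one 1) h

theorem counit_mul_εt (a h : H 1) :
    A.counit (A.mul 1 a (A.εt 1 h)) = A.counit (A.mul 1 a h) := by
  rw [A.εt_def, ← LinearMap.comp_apply A.counit, map_sm2, LinearMap.comp_id, sm2_eq_sc2,
    A.counit_mul_eq_sc2_comul_one']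

theorem counit_mul_εt' (a h : H 1) :
    A.counit (A.mul 1 a (A.εt' 1 h)) = A.counit (A.mul 1 a h) := by
  rw [A.εt'_def, ← LinearMap.comp_apply A.counit, map_sm2, LinearMap.comp_id, sm2_eq_sc2,
    sc2_comm, A.counit_mul_eq_sc2_comul_one]

theorem counit_εs_mul (h b : H 1) :
    A.counit (A.mul 1 (A.εs 1 h) b) = A.counit (A.mul 1 h b) := by
  rw [A.εs_def, ← LinearMap.flip_apply (A.mul 1), ← LinearMap.comp_apply A.counit, map_sm2,
    LinearMap.comp_id, sm2_eq_sc2, sc2_comm, A.counit_mul_eq_sc2_comul_one']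

theorem counit_εs'_mul (h b : H 1) :
    A.counit (A.mul 1 (A.εs' 1 h) b) = A.counit (A.mul 1 h b) := by
  rw [A.εs'_def, ← LinearMap.flip_apply (A.mul 1), ← LinearMap.comp_apply A.counit, map_sm2,
    LinearMap.comp_id, sm2_eq_sc2, A.counit_mul_eq_sc2_comul_one]

variable {A}

theorem εt_eq_of_counit_mul_eq {p : G} {x h : H 1}
    (hxh : ∀ a, A.counit (A.mul 1 a x) = A.counit (A.mul 1 a h)) : A.εt p x = A.εt p h := by
  rw [A.εt_def, A.εt_def]
  congr 2
  ext a
  exact hxh a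

theorem εt'_eq_of_counit_mul_eq {p : G} {x h : H 1}
    (hxh : ∀ a, A.counit (A.mul 1 a x) = A.counit (A.mul 1 a h)) : A.εt' p x = A.εt' p h := by
  rw [A.εt'_def, A.εt'_def]
  congr 2
  ext a
  exact hxh a

theorem εs_eq_of_counit_mul_eq {p : G} {x h : H 1}
    (hxh : ∀ b, A.counit (A.mul 1 x b) = A.counit (A.mul 1 h b)) : A.εs p x = A.εs p h := by
  rw [A.εs_def, A.εs_def]
  congr 2
  ext b
  exact hxh b

theorem εs'_eq_of_counit_mul_eq {p : G} {x h : H 1}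
    (hxh : ∀ b, A.counit (A.mul 1 x b) = A.counit (A.mul 1 h b)) : A.εs' p x = A.εs' p h := by
  rw [A.εs'_def, A.εs'_def]
  congr 2
  ext b
  exact hxh b

end GCWHQ

end WHQPaper

open WHQPaper in
/-- In a group-cograded weak Hopf quasigroup, for every `p ∈ G` the maps
`ε^t_p, ε^s_p, ε̃^t_p, ε̃^s_p : H_e → H_p` satisfy
`ε^t_p ∘ ε̃^t_e = ε^t_p`, `ε̃^t_p ∘ ε^t_e = ε̃^t_p`, `ε^s_p ∘ ε̃^s_e = ε^s_p` and
`ε̃^s_p ∘ ε^s_e = ε̃^s_p`. -/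
theorem counital_maps_comp {k G : Type*} [Field k] [Group G] {H : G → Type*}
    [∀ p, AddCommGroup (H p)] [∀ p, Module k (H p)] (A : GCWHQ k G H) (p : G) :
    A.εt p ∘ₗ A.εt' 1 = A.εt p ∧
    A.εt' p ∘ₗ A.εt 1 = A.εt' p ∧
    A.εs p ∘ₗ A.εs' 1 = A.εs p ∧
    A.εs' p ∘ₗ A.εs 1 = A.εs' p := by
  refine ⟨?_, ?_, ?_, ?_⟩ <;> ext h
  · exact GCWHQ.εt_eq_of_counit_mul_eq (A.counit_mul_εt' · h)
  · exact GCWHQ.εt'_eq_of_counit_mul_eq (A.counit_mul_εt · h)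
  · exact GCWHQ.εs_eq_of_counit_mul_eq (A.counit_εs'_mul h)
  · exact GCWHQ.εs'_eq_of_counit_mul_eq (A.counit_εs_mul h)
end
end
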